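/- Fix an integer m ≥ 1 and work in ℚ[x_1,…,x_m]. For all integers k ≥ 1 and r ≥ 0, the identity N_{k+r,k} = Σ_{i=0}^{r} (-1)^i · C(k+i,i) · h_{r-i} · e_{k+i} holds, where e_j is the j-th elementary symmetric polynomial, h_j is the j-th complete homogeneous symmetric polynomial (with e_0 = h_0 = 1 and e_j = 0 for j > m), and C(a,b) denotes the binomial coefficient. -/

import Mathlib

open Finset MvPolynomial

/-!
Compare coefficients of `x^μ`, writing `s = #supp μ`. Since `h_a` has every monomial of degree `a`
with coefficient `1` and `e_b = ∑_{#T = b} x_T`, the coefficient in `h_a e_b` is the number of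
`b`-subsets of `supp μ`, i.e. `C(s, b)`, when `deg μ = a + b` (and `0` otherwise). So for
`deg μ = k + r` the right-hand side has coefficient
`∑ᵢ (-1)^i C(k+i, i) C(s, k+i) = C(s, k) ∑ᵢ (-1)^i C(s-k, i)`, which is `1` if `s = k` and `0`
otherwise because `s - k ≤ r`.
-/

/-- `N m n k` is the sum of all monomial symmetric polynomials in `x_1, …, x_m`
indexed by partitions of `n` of length `k`: the sum of all monomials of total
degree `n` having exactly `k` variables with nonzero exponent. -/
noncomputable def N (m n k : ℕ) : MvPolynomial (Fin m) ℚ :=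
  ∑ a ∈ (Finset.Nat.antidiagonalTuple m n).filter
      (fun a => (Finset.univ.filter fun i => a i ≠ 0).card = k),
    MvPolynomial.monomial (Finsupp.equivFunOnFinite.symm a) 1

lemma Int.alternating_sum_range_choose_of_le {d r : ℕ} (hd : d ≤ r) :
    ∑ i ∈ Finset.range (r + 1), (-1 : ℤ) ^ i * d.choose i = if d = 0 then 1 else 0 := by
  rw [← Int.alternating_sum_range_choose]
  refine (sum_subset (range_subset_range.mpr (by omega)) fun i _ hi => ?_).symm
  rw [Nat.choose_eq_zero_of_lt (by simpa using hi), Nat.cast_zero, mul_zero]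

lemma Nat.choose_add_mul_choose (k d i : ℕ) :
    (k + i).choose i * (k + d).choose (k + i) = (k + d).choose k * d.choose i := by
  have h := Nat.choose_mul (n := k + d) (k := k + i) (s := k) (by omega)
  rw [Nat.add_sub_cancel_left, Nat.add_sub_cancel_left] at h
  rw [← Nat.choose_symm_add (a := k), mul_comm, h]

lemma Int.alternating_sum_choose_mul_choose {k r s : ℕ} (hs : s ≤ k + r) :
    ∑ i ∈ Finset.range (r + 1), (-1 : ℤ) ^ i * (k + i).choose i * s.choose (k + i)
      = if s = k then 1 else 0 := by
  rcases lt_or_ge s k with hsk | hks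
  · rw [if_neg hsk.ne]
    refine sum_eq_zero fun i _ => ?_
    rw [Nat.choose_eq_zero_of_lt (show s < k + i by omega), Nat.cast_zero, mul_zero]
  obtain ⟨d, rfl⟩ := Nat.exists_eq_add_of_le hks
  calc ∑ i ∈ Finset.range (r + 1), (-1 : ℤ) ^ i * (k + i).choose i * (k + d).choose (k + i)
      = (k + d).choose k * ∑ i ∈ Finset.range (r + 1), (-1 : ℤ) ^ i * d.choose i := by
        rw [mul_sum]
        refine sum_congr rfl fun i _ => ?_
        rw [mul_assoc, ← Nat.cast_mul, Nat.choose_add_mul_choose, Nat.cast_mul]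
        ring
    _ = if k + d = k then 1 else 0 := by
        rw [Int.alternating_sum_range_choose_of_le (by omega)]
        by_cases hd : d = 0 <;> simp [hd]

namespace Finsupp

variable {σ : Type*}

lemma card_support_le_degree (μ : σ →₀ ℕ) : #μ.support ≤ μ.degree := by
  rw [degree_apply, card_eq_sum_ones]
  gcongr with i hi
  exact Nat.one_le_iff_ne_zero.mpr (mem_support_iff.mp hi)

lemma degree_sum_single_one (T : Finset σ) : (∑ i ∈ T, single i 1 : σ →₀ ℕ).degree = #T := by
  simp [map_sum]

variable [DecidableEq σ]

lemma sum_single_one_le_iff (T : Finset σ) (μ : σ →₀ ℕ) :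
    ∑ i ∈ T, single i 1 ≤ μ ↔ T ⊆ μ.support := by
  simp only [le_def, Finset.sum_apply', single_apply, Finset.sum_ite_eq', subset_iff,
    mem_support_iff]
  refine ⟨fun h i hi => ?_, fun h i => ?_⟩
  · simpa [hi, Nat.one_le_iff_ne_zero] using h i
  · split_ifs with hi
    · exact Nat.one_le_iff_ne_zero.mpr (h hi)
    · exact Nat.zero_le _

end Finsupp

namespace MvPolynomial

variable {σ R : Type*} [CommSemiring R] [DecidableEq σ]

lemma prod_map_X_eq_monomial (t : Multiset σ) :
    (t.map (X : σ → MvPolynomial σ R)).prod = monomial (Multiset.toFinsupp t) 1 := by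
  induction t using Multiset.induction with
  | empty => simp
  | cons a s ih =>
    rw [Multiset.map_cons, Multiset.prod_cons, ih, X, monomial_mul, one_mul,
      ← Multiset.singleton_add, Multiset.toFinsupp_add, Multiset.toFinsupp_singleton]

variable [Fintype σ]

lemma coeff_hsymm (n : ℕ) (μ : σ →₀ ℕ) :
    coeff μ (hsymm σ R n) = if μ.degree = n then 1 else 0 := by
  simp_rw [hsymm, coeff_sum, prod_map_X_eq_monomial, coeff_monomial]
  by_cases h : μ.degree = n
  · have hcard : Multiset.card (Finsupp.toMultiset μ) = n :=
      (Finsupp.card_toMultiset μ).trans h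
    rw [if_pos h, Fintype.sum_eq_single ⟨_, hcard⟩ fun s hs => if_neg fun hμ => hs ?_]
    · exact if_pos (Finsupp.toMultiset_toFinsupp μ)
    · exact Sym.coe_injective (hμ ▸ (Multiset.toFinsupp_toMultiset _).symm)
  · rw [if_neg h]
    refine sum_eq_zero fun s _ => if_neg ?_
    rintro rfl
    exact h ((Multiset.toFinsupp_sum_eq _).trans s.2)

lemma coeff_hsymm_mul_esymm (a b : ℕ) (μ : σ →₀ ℕ) :
    coeff μ (hsymm σ R a * esymm σ R b)
      = if μ.degree = a + b then ((#μ.support).choose b : R) else 0 := by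
  rw [esymm_eq_sum_monomial, mul_sum, coeff_sum]
  simp_rw [coeff_mul_monomial', coeff_hsymm, mul_one, Finsupp.sum_single_one_le_iff]
  have hterm : ∀ T ∈ powersetCard b univ,
      (if T ⊆ μ.support then
        (if (μ - ∑ i ∈ T, Finsupp.single i 1).degree = a then (1 : R) else 0) else 0)
      = if μ.degree = a + b then (if T ⊆ μ.support then 1 else 0) else 0 := by
    intro T hT
    by_cases hTμ : T ⊆ μ.support
    · have hdeg : μ.degree = (μ - ∑ i ∈ T, Finsupp.single i 1).degree + b := by
        rw [← (mem_powersetCard.mp hT).2, ← Finsupp.degree_sum_single_one, ← map_add,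
          tsub_add_cancel_of_le ((Finsupp.sum_single_one_le_iff T μ).mpr hTμ)]
      simp only [hTμ, if_true, hdeg, Nat.add_right_cancel_iff]
    · simp [hTμ]
  have hsubsets : (powersetCard b univ).filter (· ⊆ μ.support) = powersetCard b μ.support := by
    ext T
    simp [mem_powersetCard, and_comm]
  rw [sum_congr rfl hterm, sum_ite_irrel, sum_const_zero, sum_boole, hsubsets, card_powersetCard]

end MvPolynomial

lemma coeff_N (m n k : ℕ) (μ : Fin m →₀ ℕ) :
    coeff μ (N m n k) = if μ.degree = n ∧ #μ.support = k then 1 else 0 := by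
  simp_rw [N, coeff_sum, coeff_monomial, Equiv.symm_apply_eq, sum_ite_eq', mem_filter,
    Nat.mem_antidiagonalTuple, Finsupp.degree_eq_sum, Finsupp.equivFunOnFinite_apply]
  congr 4
  ext i
  simp

theorem N_eq_sum_hsymm_esymm_general (m : ℕ) (k r : ℕ) :
    N m (k + r) k
      = ∑ i ∈ Finset.range (r + 1),
          MvPolynomial.C ((-1 : ℚ) ^ i * (Nat.choose (k + i) i))
            * MvPolynomial.hsymm (Fin m) ℚ (r - i) * MvPolynomial.esymm (Fin m) ℚ (k + i) := by
  ext μ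
  have hdeg : ∀ i ∈ Finset.range (r + 1), r - i + (k + i) = k + r := fun i hi => by
    rw [mem_range] at hi; omega
  simp_rw [coeff_N, coeff_sum, mul_assoc, coeff_C_mul, coeff_hsymm_mul_esymm]
  rw [sum_congr rfl fun i hi => by rw [hdeg i hi, mul_ite, mul_zero], sum_ite_irrel,
    sum_const_zero]
  by_cases hμ : μ.degree = k + r
  · have hsum := Int.alternating_sum_choose_mul_choose (hμ ▸ μ.card_support_le_degree)
    simp only [hμ, true_and, if_true]
    exact_mod_cast hsum.symm
  · simp [hμ]

theorem N_eq_sum_hsymm_esymm (m : ℕ) (hm : 1 ≤ m) (k r : ℕ) (hk : 1 ≤ k) :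
    N m (k + r) k
      = ∑ i ∈ Finset.range (r + 1),
          MvPolynomial.C ((-1 : ℚ) ^ i * (Nat.choose (k + i) i))
            * MvPolynomial.hsymm (Fin m) ℚ (r - i) * MvPolynomial.esymm (Fin m) ℚ (k + i) :=
  N_eq_sum_hsymm_esymm_general m k r
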